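/- Let n ≥ 2 be even, set m := 3n/2, and let γ = (γ_t)_{0 ≤ t ≤ 3n} be a univariate truncated moment sequence. The following are equivalent: (1) γ admits a [0,∞)-representing measure; (2) γ admits a (rank γ)-atomic [0,∞)-representing measure; (3) H_m(γ) = (γ_{i+j})_{i,j=0}^{m} is positive semidefinite, (γ_{i+j+1})_{i,j=0}^{m−1} is positive semidefinite, and the vector (γ_{m+1}, …, γ_{2m})ᵀ lies in the column space of (γ_{i+j+1})_{i,j=0}^{m−1}. Moreover, in this case rank γ ≤ m + 1. -/

import Mathlib

open MeasureTheory Matrix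

noncomputable section

/-- The `s × s` Hankel matrix `(γ_{i+j})_{i,j=0}^{s-1}`; the matrix `H_m(γ)` of the paper
is `hankel (m+1) γ`. -/
def hankel (s : ℕ) (γ : ℕ → ℝ) : Matrix (Fin s) (Fin s) ℝ :=
  fun i j => γ ((i : ℕ) + (j : ℕ))

/-- The rank of a truncated sequence `(γ_t)_{t ≤ 2k}` (with `H_k(γ)` psd): it is `k+1` if
`H_k(γ)` is nonsingular, and otherwise the least `i` such that `H_i(γ)` is singular. -/
def seqRank (k : ℕ) (γ : ℕ → ℝ) : ℕ := by
  classical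
  exact if h : ∃ i, i ≤ k ∧ (hankel (i+1) γ).det = 0 then Nat.find h else k + 1

/-- With `r := seqRank`, the recursion `γ_j = φ₀ γ_{j-r} + ⋯ + φ_{r-1} γ_{j-1}` where
`(φ₀, …, φ_{r-1})ᵀ = H_{r-1}(γ)⁻¹ (γ_r, …, γ_{2r-1})ᵀ`, for all `r ≤ j ≤ hi`. -/
def recurHolds (r : ℕ) (γ : ℕ → ℝ) (hi : ℕ) : Prop :=
  ∀ j : ℕ, r ≤ j → j ≤ hi →
    γ j = ∑ i : Fin r,
      ((hankel r γ)⁻¹.mulVec (fun i : Fin r => γ (r + (i : ℕ)))) i * γ (j - r + (i : ℕ))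

/-- `(γ_t)_{t ≤ 2k}` is positively recursively generated. -/
def PRG (k : ℕ) (γ : ℕ → ℝ) : Prop :=
  (hankel (seqRank k γ) γ).PosDef ∧ recurHolds (seqRank k γ) γ (2 * k)

/-- `ν` is an `E`-representing measure for the univariate sequence `(γ_t)_{t ≤ N}`. -/
def IsRepMeasure1 (N : ℕ) (γ : ℕ → ℝ) (E : Set ℝ) (ν : Measure ℝ) : Prop :=
  ν Eᶜ = 0 ∧ ∀ t : ℕ, t ≤ N →
    Integrable (fun x : ℝ => x ^ t) ν ∧ γ t = ∫ x : ℝ, x ^ t ∂ν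

/-- `ν` is `r`-atomic: a sum of `r` point masses with strictly positive weights at `r`
distinct points. -/
def IsAtomicMeasure1 (r : ℕ) (ν : Measure ℝ) : Prop :=
  ∃ (x : Fin r → ℝ) (c : Fin r → ℝ), Function.Injective x ∧ (∀ i, 0 < c i) ∧
    ν = ∑ i : Fin r, ENNReal.ofReal (c i) • Measure.dirac (x i)

/-!
A `[0, ∞)`-representing measure `ν` makes `H_m(γ)` and `B = (γ_{i+j+1})` the Gram matrices of the
monomials in `L²(ν)` and `L²(x ν)`, so both are positive semidefinite; and if `B u = 0` then
`x q(x)² = 0` `ν`-a.e. for `q = ∑ uᵢ xⁱ`, so `(γ_{m+1}, …, γ_{2m}) ⬝ u = ∫ x^m · x q(x) dν = 0`,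
which puts that vector in the range of the symmetric matrix `B`.

Conversely let `r` be the rank of `γ`. If `H = H_{r-1}(γ)` is positive definite and its shift `A`
is positive semidefinite, diagonalise them simultaneously, `H = Y Yᵀ` and `A = Y diag(μ) Yᵀ`. The
Hankel structure (row `i + 1` of `H` is row `i` of `A`) forces `Y = Vᵀ diag(y)` with `V` the
Vandermonde matrix of `μ`, i.e. `γ_t = ∑ₖ yₖ² μₖ^t` for `t < 2r`: an `r`-atomic measure on `[0, ∞)`,
with distinct atoms because `Y` is invertible. If `r ≤ m`, a kernel vector of `H_r(γ)` yields a
linear recursion that positivity of `H_m(γ)` propagates up to `γ_{2m}` (the last step uses the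
range condition); the atomic moments satisfy the same recursion, so they agree with `γ` up to
`2m`. If `r = m + 1`, first extend `γ` by `γ_{2m+1} = vᵀ B v`, which keeps the shifted Hankel
matrix positive semidefinite.
-/

namespace Matrix

variable {n : Type*} [Fintype n] [DecidableEq n]

theorem IsHermitian.exists_mulVec_eq {A : Matrix n n ℝ} (hA : A.IsHermitian) {c : n → ℝ}
    (hc : ∀ u, A *ᵥ u = 0 → c ⬝ᵥ u = 0) : ∃ v, A *ᵥ v = c := by
  have hT := isSymmetric_toEuclideanLin_iff.mpr hA
  obtain ⟨v, hv⟩ : WithLp.toLp 2 c ∈ LinearMap.range (toEuclideanLin A) := by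
    rw [← Submodule.orthogonal_orthogonal (LinearMap.range _), hT.orthogonal_range]
    intro u hu
    have := hc u.ofLp (by simpa using congrArg WithLp.ofLp hu)
    simpa [EuclideanSpace.inner_eq_star_dotProduct, dotProduct_comm] using this
  exact ⟨v.ofLp, by simpa using congrArg WithLp.ofLp hv⟩

open scoped MatrixOrder in
theorem PosDef.exists_eq_mul_diagonal_mul_transpose {H A : Matrix n n ℝ} (hH : H.PosDef)
    (hA : A.PosSemidef) :
    ∃ (Y : Matrix n n ℝ) (μ : n → ℝ), IsUnit Y ∧ (∀ k, 0 ≤ μ k) ∧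
      H = Y * Yᵀ ∧ A = Y * diagonal μ * Yᵀ := by
  set N := CFC.sqrt H
  have hNN : N * N = H := CFC.sqrt_mul_sqrt_self H hH.posSemidef.nonneg
  have hNt : Nᵀ = N := (CFC.sqrt_nonneg H).posSemidef.isHermitian
  have hN : IsUnit N := isUnit_of_mul_isUnit_left (hNN ▸ hH.isUnit)
  have hNu := (isUnit_iff_isUnit_det N).mp hN
  obtain ⟨S, hSA, hS⟩ : ∃ S : Matrix n n ℝ, A = N * S * N ∧ S.PosSemidef := by
    refine ⟨N⁻¹ * A * N⁻¹, ?_, ?_⟩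
    · simp only [← mul_assoc, mul_nonsing_inv N hNu, one_mul]
      rw [mul_assoc, nonsing_inv_mul N hNu, mul_one]
    · simpa [transpose_nonsing_inv, hNt] using hA.conjTranspose_mul_mul_same N⁻¹
  set U : Matrix n n ℝ := ↑hS.1.eigenvectorUnitary
  have hU : U * Uᵀ = 1 := Unitary.coe_mul_star_self hS.1.eigenvectorUnitary
  refine ⟨N * U, hS.1.eigenvalues, hN.mul (Unitary.isUnit_coe), hS.eigenvalues_nonneg, ?_, ?_⟩
  · rw [transpose_mul, hNt, mul_assoc, ← mul_assoc U, hU, one_mul, hNN]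
  · have hspec := hS.1.spectral_theorem
    simp only [Unitary.conjStarAlgAut_apply, RCLike.ofReal_real_eq_id, Function.id_comp,
      star_eq_conjTranspose, conjTranspose_eq_transpose_of_trivial] at hspec
    rw [transpose_mul, hNt, hSA]
    conv_lhs => rw [hspec]
    simp only [mul_assoc]
    rfl

end Matrix

theorem hankel_transpose (s : ℕ) (γ : ℕ → ℝ) : (hankel s γ)ᵀ = hankel s γ := by
  ext i j
  simp only [transpose_apply, hankel, Nat.add_comm]

theorem isHermitian_hankel (s : ℕ) (γ : ℕ → ℝ) : (hankel s γ).IsHermitian := by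
  rw [IsHermitian, conjTranspose_eq_transpose_of_trivial, hankel_transpose]

theorem posSemidef_hankel_of_le {s s' : ℕ} (h : s ≤ s') {γ : ℕ → ℝ}
    (hγ : (hankel s' γ).PosSemidef) : (hankel s γ).PosSemidef :=
  hγ.submatrix (Fin.castLE h)

theorem exists_eq_vandermonde_transpose_mul_diagonal {r : ℕ} {δ : ℕ → ℝ}
    {Y : Matrix (Fin r) (Fin r) ℝ} {μ : Fin r → ℝ} (hY : IsUnit Y)
    (hH : hankel r δ = Y * Yᵀ) (hA : hankel r (fun t => δ (t + 1)) = Y * diagonal μ * Yᵀ) :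
    ∃ y : Fin r → ℝ, Y = (vandermonde μ)ᵀ * diagonal y := by
  rcases Nat.eq_zero_or_pos r with rfl | hr
  · exact ⟨0, Subsingleton.elim _ _⟩
  have hrow : ∀ i (hi : i + 1 < r), Y ⟨i + 1, hi⟩ = fun k => μ k * Y ⟨i, by omega⟩ k := by
    intro i hi
    apply mulVec_injective_iff_isUnit.mpr hY
    funext j
    have h1 := congrFun (congrFun hH j) ⟨i + 1, hi⟩
    have h2 := congrFun (congrFun hA j) ⟨i, by omega⟩
    rw [mul_apply] at h1 h2
    simp only [hankel, mul_diagonal, transpose_apply, ← Nat.add_assoc] at h1 h2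
    simp only [mulVec, dotProduct, ← h1, h2]
    exact Finset.sum_congr rfl fun k _ => by ring
  have hgeom : ∀ i (hi : i < r), ∀ k, Y ⟨i, hi⟩ k = μ k ^ i * Y ⟨0, hr⟩ k := by
    intro i hi k
    induction i with
    | zero => simp
    | succ i ih => simp only [hrow i hi, ih (by omega : i < r), pow_succ]; ring
  refine ⟨Y ⟨0, hr⟩, ?_⟩
  ext ⟨i, hi⟩ k
  rw [mul_diagonal, transpose_apply, vandermonde_apply, hgeom i hi k]

def HasAtomicRep (r N : ℕ) (γ : ℕ → ℝ) : Prop :=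
  ∃ x c : Fin r → ℝ, Function.Injective x ∧ (∀ k, 0 ≤ x k) ∧ (∀ k, 0 < c k) ∧
    ∀ t < N, γ t = ∑ k, c k * x k ^ t

theorem hasAtomicRep_of_posDef_hankel {r : ℕ} {δ : ℕ → ℝ} (hH : (hankel r δ).PosDef)
    (hA : (hankel r (fun t => δ (t + 1))).PosSemidef) : HasAtomicRep r (2 * r) δ := by
  obtain ⟨Y, μ, hY, hμ, hHY, hAY⟩ := hH.exists_eq_mul_diagonal_mul_transpose hA
  obtain ⟨y, rfl⟩ := exists_eq_vandermonde_transpose_mul_diagonal hY hHY hAY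
  have hYe : ∀ i k, ((vandermonde μ)ᵀ * diagonal y) i k = μ k ^ (i : ℕ) * y k := fun i k => by
    rw [mul_diagonal, transpose_apply, vandermonde_apply]
  have hdet : (vandermonde μ).det * ∏ k, y k ≠ 0 := by
    rw [← det_diagonal, ← det_transpose (vandermonde μ), ← det_mul]
    exact ((isUnit_iff_isUnit_det _).mp hY).ne_zero
  have hy : ∀ k, y k ≠ 0 := fun k =>
    Finset.prod_ne_zero_iff.mp (right_ne_zero_of_mul hdet) k (Finset.mem_univ k)
  refine ⟨μ, fun k => y k ^ 2, det_vandermonde_ne_zero_iff.mp (left_ne_zero_of_mul hdet), hμ,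
    fun k => sq_pos_iff.mpr (hy k), ?_⟩
  intro t ht
  obtain ⟨i, rfl | rfl⟩ := Nat.even_or_odd' t
  · have h := congrFun (congrFun hHY ⟨i, by omega⟩) ⟨i, by omega⟩
    rw [mul_apply] at h
    simp only [hankel, transpose_apply, hYe, ← two_mul] at h
    rw [h]
    exact Finset.sum_congr rfl fun k _ => by ring
  · have h := congrFun (congrFun hAY ⟨i, by omega⟩) ⟨i, by omega⟩
    rw [mul_apply] at h
    simp only [hankel, mul_diagonal, transpose_apply, hYe, ← two_mul] at h
    rw [h]
    exact Finset.sum_congr rfl fun k _ => by ring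

def padVec (n t : ℕ) {r : ℕ} (u : Fin (r + 1) → ℝ) : Fin n → ℝ :=
  fun b => ∑ j : Fin (r + 1), if (b : ℕ) = t + j then u j else 0

theorem sum_mul_padVec {n t r : ℕ} (h : t + r < n) (f : ℕ → ℝ) (u : Fin (r + 1) → ℝ) :
    ∑ b : Fin n, f b * padVec n t u b = ∑ j : Fin (r + 1), f (t + j) * u j := by
  simp only [padVec, Finset.mul_sum, mul_ite, mul_zero]
  rw [Finset.sum_comm]
  refine Finset.sum_congr rfl fun j _ => ?_
  rw [Finset.sum_eq_single_of_mem (⟨t + j, by omega⟩ : Fin n) (Finset.mem_univ _)]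
  · simp
  · intro b _ hb
    exact if_neg fun hbj => hb (Fin.ext hbj)

theorem hankel_mulVec_padVec {n t r : ℕ} (h : t + r < n) (γ : ℕ → ℝ) (u : Fin (r + 1) → ℝ)
    (a : Fin n) : (hankel n γ *ᵥ padVec n t u) a = ∑ j : Fin (r + 1), γ (a + t + j) * u j := by
  simp only [mulVec, dotProduct, hankel, sum_mul_padVec h (fun b => γ (a + b)), Nat.add_assoc]

section Recurrence

variable {m r : ℕ} {γ : ℕ → ℝ} {u : Fin (r + 1) → ℝ}

theorem sum_mul_eq_zero_of_hankel_mulVec_eq_zero (hrm : r ≤ m)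
    (hH : (hankel (m + 1) γ).PosSemidef) (hu : hankel (r + 1) γ *ᵥ u = 0) :
    ∀ s, s ≤ m ∨ s + r < 2 * m → ∑ j : Fin (r + 1), γ (s + j) * u j = 0 := by
  -- `u` shifted by `t` stays in the kernel of `H_m(γ)`: its quadratic form only involves
  -- relations already obtained from the shift by `t - 1`.
  have hker : ∀ t, t = 0 ∨ t + r < m → hankel (m + 1) γ *ᵥ padVec (m + 1) t u = 0 := by
    intro t
    induction t using Nat.strong_induction_on with
    | _ t ih =>
      intro ht
      have htr : t + r < m + 1 := by omega
      have hrel : ∀ i : Fin (r + 1), ∑ j : Fin (r + 1), γ (2 * t + i + j) * u j = 0 := by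
        intro i
        rcases Nat.eq_zero_or_pos t with rfl | hpos
        · simpa [mulVec, dotProduct, hankel] using congrFun hu ⟨i, i.isLt⟩
        · have := congrFun (ih (t - 1) (by omega) (by omega)) ⟨t + i + 1, by omega⟩
          rw [hankel_mulVec_padVec (by omega), Pi.zero_apply] at this
          rw [← this]
          exact Finset.sum_congr rfl fun j _ => by congr 2; dsimp only; omega
      apply (hH.dotProduct_mulVec_zero_iff _).mp
      rw [star_trivial, dotProduct_comm, dotProduct]
      simp only [hankel_mulVec_padVec htr]
      rw [sum_mul_padVec htr (fun b => ∑ j : Fin (r + 1), γ (b + t + j) * u j)]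
      refine Finset.sum_eq_zero fun i _ => ?_
      rw [show t + i + t = 2 * t + i by omega, hrel i, zero_mul]
  intro s hs
  obtain ⟨t, a, ha, rfl, ht⟩ : ∃ t a, a ≤ m ∧ s = a + t ∧ (t = 0 ∨ t + r < m) := by
    by_cases hsm : s ≤ m
    · exact ⟨0, s, hsm, rfl, Or.inl rfl⟩
    · exact ⟨s - m, m, le_rfl, by omega, Or.inr (by omega)⟩
  have := congrFun (hker t ht) ⟨a, by omega⟩
  rw [hankel_mulVec_padVec (by omega)] at this
  simpa [Nat.add_assoc] using this

theorem sum_mul_eq_zero_of_hankel_mulVec_eq_zero_of_mulVec_eq (hrm : r ≤ m)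
    (hH : (hankel (m + 1) γ).PosSemidef) {v : Fin m → ℝ}
    (hv : hankel m (fun t => γ (t + 1)) *ᵥ v = fun i : Fin m => γ (m + 1 + i))
    (hu : hankel (r + 1) γ *ᵥ u = 0) :
    ∀ s, s + r ≤ 2 * m → ∑ j : Fin (r + 1), γ (s + j) * u j = 0 := by
  have hlow := sum_mul_eq_zero_of_hankel_mulVec_eq_zero hrm hH hu
  intro s hs
  by_cases hcov : s ≤ m ∨ s + r < 2 * m
  · exact hlow s hcov
  -- The last relation: `u` shifted to the end lies in the kernel of the symmetric matrix `B`,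
  -- which is orthogonal to `B v`.
  have htr : m - 1 - r + r < m := by omega
  set w := padVec m (m - 1 - r) u
  have hw : hankel m (fun t => γ (t + 1)) *ᵥ w = 0 := by
    funext a
    rw [hankel_mulVec_padVec htr, Pi.zero_apply, ← hlow (a + m - r) (by omega)]
    exact Finset.sum_congr rfl fun j _ => by congr 2; omega
  have h0 : w ⬝ᵥ (hankel m (fun t => γ (t + 1)) *ᵥ v) = 0 := by
    rw [dotProduct_mulVec, ← hankel_transpose m, vecMul_transpose, hw, zero_dotProduct]
  rw [hv, dotProduct_comm, dotProduct, sum_mul_padVec htr (fun b => γ (m + 1 + b))] at h0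
  rw [← h0]
  exact Finset.sum_congr rfl fun j _ => by congr 2; omega

theorem last_ne_zero_of_hankel_mulVec_eq_zero (hr : (hankel r γ).PosDef) (hu0 : u ≠ 0)
    (hu : hankel (r + 1) γ *ᵥ u = 0) : u (Fin.last r) ≠ 0 := by
  intro hlast
  have hinit : hankel r γ *ᵥ (fun j => u j.castSucc) = 0 := by
    funext i
    have := congrFun hu i.castSucc
    simpa [mulVec, dotProduct, hankel, Fin.sum_univ_castSucc, hlast] using this
  have hinit0 := mulVec_injective_iff_isUnit.mpr hr.isUnit (hinit.trans (mulVec_zero _).symm)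
  apply hu0
  funext j
  induction j using Fin.lastCases with
  | last => exact hlast
  | cast j => exact congrFun hinit0 j

theorem eq_of_sum_mul_eq_zero {M : ℕ} (hu : u (Fin.last r) ≠ 0) {α β : ℕ → ℝ}
    (hα : ∀ s, s + r ≤ M → ∑ j : Fin (r + 1), α (s + j) * u j = 0)
    (hβ : ∀ s, s + r ≤ M → ∑ j : Fin (r + 1), β (s + j) * u j = 0) (h : ∀ t < r, α t = β t) :
    ∀ t ≤ M, α t = β t := by
  intro t
  induction t using Nat.strong_induction_on with
  | _ t ih =>
    intro ht
    by_cases htr : t < r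
    · exact h t htr
    obtain ⟨s, rfl⟩ : ∃ s, t = s + r := ⟨t - r, by omega⟩
    have hα' := hα s ht
    have hβ' := hβ s ht
    rw [Fin.sum_univ_castSucc] at hα' hβ'
    have hlow : ∀ j : Fin r, α (s + j) = β (s + j) := fun j => ih _ (by omega) (by omega)
    simp only [Fin.val_castSucc, Fin.val_last, hlow] at hα' hβ'
    exact mul_right_cancel₀ hu (by linarith)

theorem sum_moments_mul_eq_zero {n : ℕ} {x c : Fin n → ℝ} (hx : Function.Injective x)
    (h : ∀ s < n, ∑ j : Fin (r + 1), (∑ k, c k * x k ^ (s + j)) * u j = 0) (s : ℕ) :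
    ∑ j : Fin (r + 1), (∑ k, c k * x k ^ (s + j)) * u j = 0 := by
  have hsum : ∀ s : ℕ, ∑ j : Fin (r + 1), (∑ k, c k * x k ^ (s + j)) * u j
      = ∑ k, (c k * ∑ j : Fin (r + 1), x k ^ (j : ℕ) * u j) * x k ^ s := fun s => by
    simp only [Finset.sum_mul, Finset.mul_sum]
    rw [Finset.sum_comm]
    exact Finset.sum_congr rfl fun k _ => Finset.sum_congr rfl fun j _ => by ring
  -- The first `n` relations are an invertible Vandermonde system for `(c k * q (x k))ₖ`,
  -- where `q = ∑ⱼ u j X^j`.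
  have hroot := eq_zero_of_forall_pow_sum_mul_pow_eq_zero hx fun i =>
    (hsum i).symm.trans (h i i.isLt)
  rw [hsum s]
  simp [show ∀ k, c k * ∑ j : Fin (r + 1), x k ^ (j : ℕ) * u j = 0 from congrFun hroot]

end Recurrence

theorem seqRank_le (k : ℕ) (γ : ℕ → ℝ) : seqRank k γ ≤ k + 1 := by
  unfold seqRank
  split_ifs with h
  · exact (Nat.find_spec h).1.trans k.le_succ
  · exact le_rfl

section SeqRank

variable {k : ℕ} {γ : ℕ → ℝ}

theorem det_hankel_seqRank_succ (h : seqRank k γ ≤ k) :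
    (hankel (seqRank k γ + 1) γ).det = 0 := by
  generalize hr : seqRank k γ = r at h
  unfold seqRank at hr
  split_ifs at hr with hex
  · exact hr ▸ (Nat.find_spec hex).2
  · omega

theorem det_hankel_ne_zero_of_lt_seqRank {i : ℕ} :
    i < seqRank k γ → (hankel (i + 1) γ).det ≠ 0 := by
  unfold seqRank
  split_ifs with h
  · exact fun hi hdet => Nat.find_min h hi ⟨by have := (Nat.find_spec h).1; omega, hdet⟩
  · exact fun hi hdet => h ⟨i, by omega, hdet⟩

theorem posDef_hankel_seqRank (hH : (hankel (k + 1) γ).PosSemidef) :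
    (hankel (seqRank k γ) γ).PosDef := by
  refine (posSemidef_hankel_of_le (seqRank_le k γ) hH).posDef_iff_det_ne_zero.mpr ?_
  have hlt : ∀ i < seqRank k γ, (hankel (i + 1) γ).det ≠ 0 :=
    fun i => det_hankel_ne_zero_of_lt_seqRank
  generalize seqRank k γ = r at hlt ⊢
  cases r with
  | zero => simp
  | succ i => exact hlt i i.lt_succ_self

end SeqRank

theorem posSemidef_hankel_succ {m : ℕ} {δ : ℕ → ℝ} (hB : (hankel m δ).PosSemidef)
    {v : Fin m → ℝ} (hv : hankel m δ *ᵥ v = fun i : Fin m => δ (m + i))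
    (htop : δ (2 * m) = v ⬝ᵥ fun i => δ (m + i)) : (hankel (m + 1) δ).PosSemidef := by
  -- `hankel (m + 1) δ = Lᵀ (hankel m δ) L` for the `m × (m + 1)` matrix `L = [1 | v]`.
  set L : Matrix (Fin m) (Fin (m + 1)) ℝ := of fun i => Fin.snoc ((1 : Matrix _ _ ℝ) i) (v i)
  have hHL : hankel m δ * L = of fun i => Fin.snoc (hankel m δ i) ((hankel m δ *ᵥ v) i) := by
    ext i j
    induction j using Fin.lastCases <;> simp [L, mul_apply, mulVec, dotProduct, one_apply]
  have hsymm : ∀ j, ∑ i, v i * hankel m δ i j = δ (m + j) := fun j => by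
    rw [← congrFun hv j]
    simp only [mulVec, dotProduct, hankel, Nat.add_comm, mul_comm]
  have key : hankel (m + 1) δ = Lᵀ * hankel m δ * L := by
    rw [Matrix.mul_assoc, hHL]
    ext p q
    induction p using Fin.lastCases with
    | last =>
      induction q using Fin.lastCases with
      | last => simpa [L, mul_apply, hankel, hv, dotProduct, two_mul] using htop
      | cast j => simpa [L, mul_apply, hankel] using (hsymm j).symm
    | cast i =>
      induction q using Fin.lastCases with
      | last => simp [L, mul_apply, hankel, hv, one_apply, Nat.add_comm]
      | cast j => simp [L, mul_apply, hankel, one_apply]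
  simpa [key] using hB.conjTranspose_mul_mul_same L

section Atomic

variable {m : ℕ} {γ : ℕ → ℝ} {v : Fin m → ℝ}

theorem hasAtomicRep_of_det_hankel_eq_zero {r : ℕ} (hrm : r ≤ m)
    (hH : (hankel (m + 1) γ).PosSemidef) (hB : (hankel m (fun t => γ (t + 1))).PosSemidef)
    (hv : hankel m (fun t => γ (t + 1)) *ᵥ v = fun i : Fin m => γ (m + 1 + i))
    (hr : (hankel r γ).PosDef) (hdet : (hankel (r + 1) γ).det = 0) :
    HasAtomicRep r (2 * m + 1) γ := by
  obtain ⟨x, c, hx, hx0, hc, hγ⟩ :=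
    hasAtomicRep_of_posDef_hankel hr (posSemidef_hankel_of_le hrm hB)
  obtain ⟨u, hu0, hu⟩ := exists_mulVec_eq_zero_iff.mpr hdet
  have hrel := sum_mul_eq_zero_of_hankel_mulVec_eq_zero_of_mulVec_eq hrm hH hv hu
  have hrelx := sum_moments_mul_eq_zero hx fun s hs => by
    rw [← hrel s (by omega)]
    exact Finset.sum_congr rfl fun j _ => by rw [hγ _ (by omega)]
  refine ⟨x, c, hx, hx0, hc, fun t ht => ?_⟩
  exact eq_of_sum_mul_eq_zero (last_ne_zero_of_hankel_mulVec_eq_zero hr hu0 hu) hrel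
    (fun s _ => hrelx s) (fun s hs => hγ s (by omega)) t (by omega)

theorem hasAtomicRep_of_posDef_hankel_succ (hH : (hankel (m + 1) γ).PosDef)
    (hB : (hankel m (fun t => γ (t + 1))).PosSemidef)
    (hv : hankel m (fun t => γ (t + 1)) *ᵥ v = fun i : Fin m => γ (m + 1 + i)) :
    HasAtomicRep (m + 1) (2 * m + 1) γ := by
  set δ : ℕ → ℝ := fun t => if t ≤ 2 * m then γ t else v ⬝ᵥ fun i : Fin m => γ (m + 1 + i)
  have hδ : ∀ t ≤ 2 * m, δ t = γ t := fun t ht => if_pos ht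
  have hHδ : hankel (m + 1) δ = hankel (m + 1) γ := by
    ext i j
    exact hδ _ (by omega)
  have hBδ : hankel m (fun t => δ (t + 1)) = hankel m (fun t => γ (t + 1)) := by
    ext i j
    exact hδ _ (by omega)
  have hcol : (fun i : Fin m => δ (m + i + 1)) = fun i : Fin m => γ (m + 1 + i) := by
    funext i
    rw [hδ _ (by omega), Nat.add_right_comm]
  have hAδ : (hankel (m + 1) (fun t => δ (t + 1))).PosSemidef := by
    refine posSemidef_hankel_succ (v := v) (hBδ ▸ hB) ?_ ?_
    · simpa only [hBδ, hcol] using hv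
    · simp only [hcol]
      exact if_neg (by omega)
  obtain ⟨x, c, hx, hx0, hc, hγ⟩ := hasAtomicRep_of_posDef_hankel (hHδ ▸ hH) hAδ
  exact ⟨x, c, hx, hx0, hc, fun t ht => (hδ t (by omega)).symm.trans (hγ t (by omega))⟩

theorem hasAtomicRep_seqRank (hH : (hankel (m + 1) γ).PosSemidef)
    (hB : (hankel m (fun t => γ (t + 1))).PosSemidef)
    (hv : hankel m (fun t => γ (t + 1)) *ᵥ v = fun i : Fin m => γ (m + 1 + i)) :
    HasAtomicRep (seqRank m γ) (2 * m + 1) γ := by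
  have hr := posDef_hankel_seqRank hH
  rcases (seqRank_le m γ).lt_or_eq with hlt | heq
  · exact hasAtomicRep_of_det_hankel_eq_zero (by omega) hH hB hv hr
      (det_hankel_seqRank_succ (by omega))
  · rw [heq] at hr ⊢
    exact hasAtomicRep_of_posDef_hankel_succ hr hB hv

end Atomic

namespace IsRepMeasure1

variable {N : ℕ} {γ : ℕ → ℝ} {E : Set ℝ} {ν : Measure ℝ}

theorem integrable_sum (h : IsRepMeasure1 N γ E ν) {ι : Type*} [Fintype ι] (a : ι → ℝ)
    {f : ι → ℕ} (hf : ∀ i, f i ≤ N) : Integrable (fun x => ∑ i, a i * x ^ f i) ν :=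
  integrable_finsetSum _ fun i _ => ((h.2 _ (hf i)).1.const_mul (a i))

theorem sum_mul_eq_integral (h : IsRepMeasure1 N γ E ν) {ι : Type*} [Fintype ι] (a : ι → ℝ)
    {f : ι → ℕ} (hf : ∀ i, f i ≤ N) : ∑ i, a i * γ (f i) = ∫ x, ∑ i, a i * x ^ f i ∂ν := by
  rw [integral_finsetSum _ fun i _ => ((h.2 _ (hf i)).1.const_mul (a i))]
  exact Finset.sum_congr rfl fun i _ => by rw [integral_const_mul, (h.2 _ (hf i)).2]

theorem dotProduct_hankel_mulVec (h : IsRepMeasure1 N γ E ν) {s e : ℕ} (hs : 2 * s + e ≤ N + 2)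
    (v : Fin s → ℝ) :
    v ⬝ᵥ hankel s (fun t => γ (t + e)) *ᵥ v = ∫ x, x ^ e * (∑ i, v i * x ^ (i : ℕ)) ^ 2 ∂ν ∧
      Integrable (fun x => x ^ e * (∑ i, v i * x ^ (i : ℕ)) ^ 2) ν := by
  have hf : ∀ p : Fin s × Fin s, (p.1 : ℕ) + p.2 + e ≤ N := fun p => by
    have := p.1.isLt; have := p.2.isLt; omega
  have hexp : (fun x : ℝ => x ^ e * (∑ i, v i * x ^ (i : ℕ)) ^ 2) =
      fun x => ∑ p : Fin s × Fin s, v p.1 * v p.2 * x ^ ((p.1 : ℕ) + p.2 + e) := by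
    funext x
    rw [sq, Finset.sum_mul_sum, Finset.mul_sum, Fintype.sum_prod_type]
    refine Finset.sum_congr rfl fun i _ => ?_
    rw [Finset.mul_sum]
    exact Finset.sum_congr rfl fun j _ => by ring
  refine ⟨?_, hexp ▸ h.integrable_sum _ hf⟩
  rw [hexp, ← h.sum_mul_eq_integral _ hf, Fintype.sum_prod_type]
  simp only [dotProduct, mulVec, hankel, Finset.mul_sum]
  exact Finset.sum_congr rfl fun i _ => Finset.sum_congr rfl fun j _ => by ring

theorem ae_nonneg (h : IsRepMeasure1 N γ (Set.Ici 0) ν) : ∀ᵐ x ∂ν, 0 ≤ x :=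
  (measure_eq_zero_iff_ae_notMem.mp h.1).mono fun x hx => by simpa using hx

theorem posSemidef_hankel (h : IsRepMeasure1 N γ (Set.Ici 0) ν) {s e : ℕ}
    (hs : 2 * s + e ≤ N + 2) : (hankel s (fun t => γ (t + e))).PosSemidef := by
  refine .of_dotProduct_mulVec_nonneg (isHermitian_hankel _ _) fun v => ?_
  rw [star_trivial, (h.dotProduct_hankel_mulVec hs v).1]
  exact integral_nonneg_of_ae (h.ae_nonneg.mono fun x hx => by positivity)

theorem exists_hankel_mulVec_eq (h : IsRepMeasure1 N γ (Set.Ici 0) ν) {m : ℕ}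
    (hm : 2 * m ≤ N) :
    ∃ v : Fin m → ℝ, hankel m (fun t => γ (t + 1)) *ᵥ v = fun i : Fin m => γ (m + 1 + i) := by
  refine (isHermitian_hankel _ _).exists_mulVec_eq fun u hu => ?_
  obtain ⟨hq, hqi⟩ := h.dotProduct_hankel_mulVec (s := m) (e := 1) (by omega) u
  rw [hu, dotProduct_zero, eq_comm] at hq
  have hxq : ∀ᵐ x ∂ν, x * ∑ i, u i * x ^ (i : ℕ) = 0 := by
    filter_upwards [(integral_eq_zero_iff_of_nonneg_ae
      (h.ae_nonneg.mono fun x hx => by positivity) hqi).mp hq] with x hx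
    rcases mul_eq_zero.mp hx with hx | hx
    · simp_all
    · simp [pow_eq_zero_iff two_ne_zero |>.mp hx]
  rw [dotProduct_comm, dotProduct, h.sum_mul_eq_integral u (f := fun i => m + 1 + i)
    fun i => by have := i.isLt; omega]
  refine integral_eq_zero_of_ae (hxq.mono fun x hx => ?_)
  calc ∑ i, u i * x ^ (m + 1 + (i : ℕ)) = x ^ m * (x * ∑ i, u i * x ^ (i : ℕ)) := by
        simp only [Finset.mul_sum, pow_add]
        exact Finset.sum_congr rfl fun i _ => by ring
    _ = 0 := by rw [hx, mul_zero]

end IsRepMeasure1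

theorem HasAtomicRep.exists_isRepMeasure1 {r N : ℕ} {γ : ℕ → ℝ} (h : HasAtomicRep r (N + 1) γ) :
    ∃ ν, IsRepMeasure1 N γ (Set.Ici 0) ν ∧ IsAtomicMeasure1 r ν := by
  obtain ⟨x, c, hx, hx0, hc, hγ⟩ := h
  have hint : ∀ t k, Integrable (fun y : ℝ => y ^ t) (Measure.dirac (x k)) :=
    fun t k => integrable_dirac enorm_lt_top
  refine ⟨∑ k, ENNReal.ofReal (c k) • Measure.dirac (x k),
    ⟨?_, fun t ht => ⟨?_, ?_⟩⟩, x, c, hx, hc, rfl⟩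
  · simp [hx0]
  · exact integrable_finsetSum_measure.mpr fun k _ =>
      (hint t k).smul_measure ENNReal.ofReal_ne_top
  · rw [integral_finsetSum_measure fun k _ => (hint t k).smul_measure ENNReal.ofReal_ne_top,
      hγ t (by omega)]
    simp [ENNReal.toReal_ofReal (hc _).le]

theorem halfline_TMP_even_general (n m : ℕ) (hm : 2*m = 3*n) (γ : ℕ → ℝ) :
    ((∃ ν : Measure ℝ, IsRepMeasure1 (3*n) γ (Set.Ici 0) ν) ↔
      (∃ ν : Measure ℝ, IsRepMeasure1 (3*n) γ (Set.Ici 0) ν ∧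
        IsAtomicMeasure1 (seqRank m γ) ν)) ∧
    ((∃ ν : Measure ℝ, IsRepMeasure1 (3*n) γ (Set.Ici 0) ν) ↔
      ((hankel (m+1) γ).PosSemidef ∧
        (hankel m (fun t => γ (t+1))).PosSemidef ∧
        ∃ v : Fin m → ℝ, (hankel m (fun t => γ (t+1))).mulVec v =
          fun i : Fin m => γ (m + 1 + (i : ℕ)))) ∧
    ((∃ ν : Measure ℝ, IsRepMeasure1 (3*n) γ (Set.Ici 0) ν) → seqRank m γ ≤ m + 1) := by
  rw [← hm]
  have hcond : ∀ {ν}, IsRepMeasure1 (2 * m) γ (Set.Ici 0) ν →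
      (hankel (m + 1) γ).PosSemidef ∧ (hankel m (fun t => γ (t + 1))).PosSemidef ∧
        ∃ v : Fin m → ℝ, hankel m (fun t => γ (t + 1)) *ᵥ v = fun i : Fin m => γ (m + 1 + i) :=
    fun hν => ⟨by simpa using hν.posSemidef_hankel (s := m + 1) (e := 0) (by omega),
      hν.posSemidef_hankel (by omega), hν.exists_hankel_mulVec_eq le_rfl⟩
  refine ⟨⟨fun ⟨_, hν⟩ => ?_, fun ⟨ν, hν, _⟩ => ⟨ν, hν⟩⟩,
    ⟨fun ⟨_, hν⟩ => hcond hν, fun ⟨hH, hB, _, hv⟩ => ?_⟩, fun _ => seqRank_le m γ⟩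
  · obtain ⟨hH, hB, _, hv⟩ := hcond hν
    exact (hasAtomicRep_seqRank hH hB hv).exists_isRepMeasure1
  · obtain ⟨ν, hν, _⟩ := (hasAtomicRep_seqRank hH hB hv).exists_isRepMeasure1
    exact ⟨ν, hν⟩

/-- (Curto–Fialkow, `[0,∞)` case, `n` even, `m = 3n/2`.)
The sequence `(γ_t)_{t ≤ 3n}` admits a `[0,∞)`-representing measure iff it admits a
`(rank γ)`-atomic one, iff `H_m(γ)` and the shifted Hankel matrix
`(γ_{i+j+1})_{i,j=0}^{m-1}` are positive semidefinite and `(γ_{m+1}, …, γ_{2m})ᵀ` lies in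
the column space of the latter; moreover in this case `rank γ ≤ m + 1`. -/
theorem halfline_TMP_even (n m : ℕ) (hn : 2 ≤ n) (hm : 2*m = 3*n) (γ : ℕ → ℝ) :
    ((∃ ν : Measure ℝ, IsRepMeasure1 (3*n) γ (Set.Ici 0) ν) ↔
      (∃ ν : Measure ℝ, IsRepMeasure1 (3*n) γ (Set.Ici 0) ν ∧
        IsAtomicMeasure1 (seqRank m γ) ν)) ∧
    ((∃ ν : Measure ℝ, IsRepMeasure1 (3*n) γ (Set.Ici 0) ν) ↔
      ((hankel (m+1) γ).PosSemidef ∧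
        (hankel m (fun t => γ (t+1))).PosSemidef ∧
        ∃ v : Fin m → ℝ, (hankel m (fun t => γ (t+1))).mulVec v =
          fun i : Fin m => γ (m + 1 + (i : ℕ)))) ∧
    ((∃ ν : Measure ℝ, IsRepMeasure1 (3*n) γ (Set.Ici 0) ν) → seqRank m γ ≤ m + 1) :=
  halfline_TMP_even_general n m hm γ

end
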